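/- For any real a > 0 and positive integer n, ∑_{k=1}^{n} k·ψ₁(k+a) = (1/2)[(−a² + a + n² + n)ψ₁(a+n+1) + a(a−1)ψ₁(a+1) + (1−2a)ψ₀(a+n+1) + (2a−1)ψ₀(a+1) + n]. -/

import Mathlib

/-! The right-hand side satisfies the same first-order recurrence in `n` as the sum, by
`ψ₀(x + 1) = ψ₀(x) + 1/x` and `ψ₁(x + 1) = ψ₁(x) - 1/x²` at `x = a + n + 1`, and both vanish at
`n = 0`. The recurrences come from differentiating `log Γ(x + 1) = log x + log Γ(x)`. -/

open Finset

/-- The `m`-th polygamma function: the `(m+1)`-th derivative of `log ∘ Γ`. -/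
noncomputable def psi (m : ℕ) (x : ℝ) : ℝ :=
  iteratedDeriv (m + 1) (fun y => Real.log (Real.Gamma y)) x

namespace Real

-- `1/Γ` is entire, so `Γ = (1/Γ)⁻¹` is smooth wherever it does not vanish.
theorem contDiffAt_Gamma {x : ℝ} (hx : ∀ m : ℕ, x ≠ -m) {n : WithTop ℕ∞} :
    ContDiffAt ℝ n Gamma x := by
  have hΓ : Complex.Gamma x ≠ 0 := by
    rw [Complex.Gamma_ofReal]
    exact Complex.ofReal_ne_zero.2 (Gamma_ne_zero hx)
  have hinv : ContDiffAt ℂ n (fun z => (Complex.Gamma z)⁻¹⁻¹) x :=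
    Complex.differentiable_one_div_Gamma.contDiff.contDiffAt.inv (inv_ne_zero hΓ)
  simp only [inv_inv] at hinv
  exact hinv.real_of_complex

theorem contDiffAt_log_Gamma {x : ℝ} (hx : ∀ m : ℕ, x ≠ -m) {n : WithTop ℕ∞} :
    ContDiffAt ℝ n (fun y => log (Gamma y)) x :=
  (contDiffAt_log.2 (Gamma_ne_zero hx)).comp x (contDiffAt_Gamma hx)

theorem iteratedDeriv_two_log (x : ℝ) : iteratedDeriv 2 log x = -(x ^ 2)⁻¹ := by
  rw [iteratedDeriv_succ, iteratedDeriv_one, deriv_log']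
  exact deriv_inv

end Real

section Recurrence

variable {x : ℝ}

theorem psi_add_one (hx : ∀ m : ℕ, x ≠ -m) (m : ℕ) :
    psi m (x + 1) = psi m x + iteratedDeriv (m + 1) Real.log x := by
  have hx₀ : x ≠ 0 := by simpa using hx 0
  have hlog : (fun y => Real.log (Real.Gamma (y + 1))) =ᶠ[nhds x]
      fun y => Real.log y + Real.log (Real.Gamma y) := by
    filter_upwards [eventually_ne_nhds hx₀,
      (Real.contDiffAt_Gamma hx (n := 0)).continuousAt.eventually_ne (Real.Gamma_ne_zero hx)]
      with y hy hΓy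
    rw [Real.Gamma_add_one hy, Real.log_mul hy hΓy]
  rw [psi, ← congrFun (iteratedDeriv_comp_add_const _ _ _), hlog.iteratedDeriv_eq,
    iteratedDeriv_fun_add (Real.contDiffAt_log.2 hx₀) (Real.contDiffAt_log_Gamma hx), psi,
    add_comm]

theorem psi_zero_add_one (hx : ∀ m : ℕ, x ≠ -m) : psi 0 (x + 1) = psi 0 x + x⁻¹ := by
  rw [psi_add_one hx, iteratedDeriv_one, Real.deriv_log]

theorem psi_one_add_one (hx : ∀ m : ℕ, x ≠ -m) : psi 1 (x + 1) = psi 1 x - (x ^ 2)⁻¹ := by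
  rw [psi_add_one hx, Real.iteratedDeriv_two_log, sub_eq_add_neg]

end Recurrence

theorem stmt_4_general (a : ℝ) (ha : 0 < a) (n : ℕ) :
    ∑ k ∈ Icc 1 n, (k : ℝ) * psi 1 ((k : ℝ) + a) =
      (1/2) * ((-a^2 + a + n^2 + n) * psi 1 (a + n + 1) + a * (a - 1) * psi 1 (a + 1) +
        (1 - 2*a) * psi 0 (a + n + 1) + (2*a - 1) * psi 0 (a + 1) + n) := by
  induction n with
  | zero =>
    simp only [Icc_eq_empty_of_lt one_pos, sum_empty, CharP.cast_eq_zero, add_zero]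
    ring
  | succ n ih =>
    have hnonpole : ∀ m : ℕ, a + n + 1 ≠ -m := fun m => by
      have : (0 : ℝ) ≤ m := m.cast_nonneg
      linarith
    rw [sum_Icc_succ_top (by omega), ih]
    push_cast
    rw [show (n : ℝ) + 1 + a = a + n + 1 by ring, show a + (n + 1) + 1 = a + n + 1 + 1 by ring,
      psi_one_add_one hnonpole, psi_zero_add_one hnonpole]
    field_simp
    ring

theorem stmt_4 (a : ℝ) (ha : 0 < a) (n : ℕ) (hn : 0 < n) :
    ∑ k ∈ Icc 1 n, (k : ℝ) * psi 1 ((k : ℝ) + a) =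
      (1/2) * ((-a^2 + a + n^2 + n) * psi 1 (a + n + 1) + a * (a - 1) * psi 1 (a + 1) +
        (1 - 2*a) * psi 0 (a + n + 1) + (2*a - 1) * psi 0 (a + 1) + n) :=
  stmt_4_general a ha n
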